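/- Let f_j(x,y) = (x²∂_x + y²∂_y - (p-2)(x+2y))^j ((x-y)^{p-2}). Then f_j(x,y) = ((p-2)!/(p-2-j)!) · (x-y)^{p-2} · (-y)^j for all 0 ≤ j ≤ p-2. -/
import Mathlib


open MvPolynomial

/-- The operator L = x²∂ₓ + y²∂_y - (p-2)(x+2y) on ℂ[x,y]. -/
noncomputable def Lop (p : ℕ) (f : MvPolynomial (Fin 2) ℂ) : MvPolynomial (Fin 2) ℂ :=
  X 0 ^ 2 * pderiv 0 f + X 1 ^ 2 * pderiv 1 f - C ((p : ℂ) - 2) * (X 0 + 2 * X 1) * f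

lemma Lop_C_mul (p : ℕ) (c : ℂ) (f : MvPolynomial (Fin 2) ℂ) :
    Lop p (C c * f) = C c * Lop p f := by
  simp only [Lop, Derivation.leibniz, pderiv_C, smul_eq_mul]
  ring

lemma Lop_key (q j : ℕ) :
    Lop (q + 4) ((X 0 - X 1) ^ (q + 2) * (-X 1 : MvPolynomial (Fin 2) ℂ) ^ j)
      = C ((q + 2 : ℂ) - j) * ((X 0 - X 1) ^ (q + 2) * (-X 1) ^ (j + 1)) := by
  have hx : pderiv (R := ℂ) 0 (X 1 : MvPolynomial (Fin 2) ℂ) = 0 := by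
    rw [pderiv_X_of_ne]; decide
  have hy : pderiv (R := ℂ) 1 (X 0 : MvPolynomial (Fin 2) ℂ) = 0 := by
    rw [pderiv_X_of_ne]; decide
  cases j with
  | zero =>
    simp only [Lop, pow_zero, mul_one, Derivation.leibniz_pow, Derivation.leibniz,
      map_sub, pderiv_X_self, hx, hy, map_ofNat, map_zero, smul_eq_mul, nsmul_eq_mul,
      C_sub, C_add, map_natCast, Nat.add_sub_cancel, Nat.cast_zero]
    push_cast
    ring
  | succ k =>
    simp only [Lop, Derivation.leibniz_pow, Derivation.leibniz, map_sub, map_neg,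
      pderiv_X_self, hx, hy, smul_eq_mul, nsmul_eq_mul, Nat.add_sub_cancel,
      C_sub, C_add, map_natCast, map_ofNat, map_zero]
    push_cast
    ring

/-- f_j = L^j((x-y)^{p-2}) equals ((p-2)!/(p-2-j)!)(x-y)^{p-2}(-y)^j
for 0 ≤ j ≤ p-2. -/
theorem stmt12 (p : ℕ) (hp : 4 ≤ p) (j : ℕ) (hj : j ≤ p - 2) :
    (Lop p)^[j] ((X 0 - X 1) ^ (p - 2))
      = C ((((p - 2).factorial / (p - 2 - j).factorial : ℕ) : ℂ))
        * (X 0 - X 1) ^ (p - 2) * (-X 1) ^ j := by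
  obtain ⟨q, rfl⟩ : ∃ q, p = q + 4 := ⟨p - 4, by omega⟩
  have hpq : q + 4 - 2 = q + 2 := by omega
  induction j with
  | zero =>
    simp [Nat.div_self (Nat.factorial_pos _)]
  | succ k ih =>
    have hk : k ≤ q + 4 - 2 := by omega
    have h1 : k + 1 ≤ q + 2 := by omega
    have h2 : k ≤ q + 2 := by omega
    have hc : ((((q + 2).factorial / (q + 2 - k).factorial : ℕ) : ℂ)) * ((q + 2 : ℂ) - k)
        = ((((q + 2).factorial / (q + 2 - (k + 1)).factorial : ℕ) : ℂ)) := by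
      rw [← Nat.descFactorial_eq_div h2, ← Nat.descFactorial_eq_div h1,
        Nat.descFactorial_succ]
      push_cast [Nat.cast_sub h2]
      ring
    rw [Function.iterate_succ_apply', ih hk, hpq, mul_assoc, Lop_C_mul, Lop_key,
      ← mul_assoc, ← C_mul, hc]
    ring
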